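/- arXiv:math/0609244 — 7 statements merged into one kernel-verified Lean document; each statement's English description precedes it below -/
import Mathlib

section
/- Let g : ℕ → ℕ be strictly increasing and define u_{2k} = 4^{g(k)} + ε_k, u_{2k+1} = 4^{g(k)} + ε_k + k for k ≥ 1, with ε_k = 1 iff k ≡ 2 (mod 3), else 0. Then for all k ≥ 2, if u ∈ {u_{2k}, u_{2k+1}} and u' ∈ {u_{2j}, u_{2j+1}} for some j < k, then u - u' > u/2. -/
/-!
Every element of `U_k` is at least `4 ^ g k ≥ 4 * 4 ^ g j`, while every element of `U_j` is at
most `4 ^ g j + 1 + j < 2 * 4 ^ g j` because `j ≤ g j`. Hence `u > 2 u'`, i.e. `u - u' > u / 2`.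
-/

lemma add_one_lt_four_pow {j n : ℕ} (hj : 1 ≤ j) (hjn : j ≤ n) : j + 1 < 4 ^ n :=
  calc j + 1 < 2 ^ (j + 1) := Nat.lt_two_pow_self
    _ ≤ 2 ^ (2 * j) := Nat.pow_le_pow_right (by norm_num) (by omega)
    _ = 4 ^ j := by rw [pow_mul]; norm_num
    _ ≤ 4 ^ n := Nat.pow_le_pow_right (by norm_num) hjn

lemma bounds_of_mem_pair_add_ite {a k v : ℕ} {p : Prop} [Decidable p]
    (hv : v ∈ ({a + (if p then 1 else 0), a + (if p then 1 else 0) + k} : Set ℕ)) :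
    a ≤ v ∧ v ≤ a + 1 + k := by
  rcases hv with rfl | rfl <;> split_ifs <;> omega

theorem stmt_5 (g : ℕ → ℕ) (hg : StrictMono g) (u : ℕ → ℕ)
    (hu_even : ∀ k, 1 ≤ k → u (2 * k) = 4 ^ g k + (if k % 3 = 2 then 1 else 0))
    (hu_odd : ∀ k, 1 ≤ k →
      u (2 * k + 1) = 4 ^ g k + (if k % 3 = 2 then 1 else 0) + k) :
    ∀ k, 2 ≤ k → ∀ j, 1 ≤ j → j < k →
      ∀ v ∈ ({u (2 * k), u (2 * k + 1)} : Set ℕ),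
      ∀ v' ∈ ({u (2 * j), u (2 * j + 1)} : Set ℕ),
        (v : ℚ) - (v' : ℚ) > (v : ℚ) / 2 := by
  intro k hk j hj hjk v hv v' hv'
  rw [hu_even k (by omega), hu_odd k (by omega)] at hv
  rw [hu_even j hj, hu_odd j hj] at hv'
  obtain ⟨hv_lower, -⟩ := bounds_of_mem_pair_add_ite hv
  obtain ⟨-, hv'_upper⟩ := bounds_of_mem_pair_add_ite hv'
  have hj_small : j + 1 < 4 ^ g j := add_one_lt_four_pow hj hg.le_apply
  have hpow : 4 * 4 ^ g j ≤ 4 ^ g k := by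
    rw [← pow_succ']
    exact Nat.pow_le_pow_right (by norm_num) (hg hjk)
  have hdouble : (2 * v' : ℚ) < v := by exact_mod_cast (by omega : 2 * v' < v)
  linarith
end

section
/- Let C_1 and C_2 be Sidon sets of integers such that (C_1−C_1) ∩ (C_2−C_2) = {0}, (C_1+C_1) ∩ (C_2+C_2) = ∅, (C_1+C_1−C_1) ∩ C_2 = ∅, and (C_2+C_2−C_2) ∩ C_1 = ∅. Then C_1 ∪ C_2 is a Sidon set. -/
open Pointwise

/-- `B` is a Sidon set: every nonzero integer has at most one representation
as a difference of two elements of `B`. -/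
def IsSidonSet (B : Set ℤ) : Prop :=
  ∀ u : ℤ, u ≠ 0 → ({p : ℤ × ℤ | p.1 ∈ B ∧ p.2 ∈ B ∧ p.1 - p.2 = u}).Subsingleton

theorem stmt_7 (C₁ C₂ : Set ℤ) (h₁ : IsSidonSet C₁) (h₂ : IsSidonSet C₂)
    (hdiff : (C₁ - C₁) ∩ (C₂ - C₂) = {0})
    (hsum : (C₁ + C₁) ∩ (C₂ + C₂) = ∅)
    (h12 : (C₁ + C₁ - C₁) ∩ C₂ = ∅)
    (h21 : (C₂ + C₂ - C₂) ∩ C₁ = ∅) :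
    IsSidonSet (C₁ ∪ C₂) := by
  intro u hu p hp q hq
  obtain ⟨a, b⟩ := p
  obtain ⟨c, d⟩ := q
  obtain ⟨hpa, hpb, hpu⟩ := hp
  obtain ⟨hqa, hqb, hqu⟩ := hq
  simp only at hpa hpb hpu hqa hqb hqu ⊢
  have keys : ∀ x : ℤ, x ∈ (C₁ + C₁) ∩ (C₂ + C₂) → False := by
    intro x hx; rw [hsum] at hx; exact hx
  have key12 : ∀ x : ℤ, x ∈ (C₁ + C₁ - C₁) ∩ C₂ → False := by
    intro x hx; rw [h12] at hx; exact hx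
  have key21 : ∀ x : ℤ, x ∈ (C₂ + C₂ - C₂) ∩ C₁ → False := by
    intro x hx; rw [h21] at hx; exact hx
  have keyd : ∀ x : ℤ, x ∈ (C₁ - C₁) ∩ (C₂ - C₂) → x = 0 := by
    intro x hx; rw [hdiff] at hx; exact hx
  rcases hpa with h1 | h1 <;> rcases hpb with h2 | h2 <;>
    rcases hqa with h3 | h3 <;> rcases hqb with h4 | h4
  -- (1,1,1,1)
  · exact h₁ u hu ⟨h1, h2, hpu⟩ ⟨h3, h4, hqu⟩
  -- (1,1,1,2)
  · exfalso
    have he : c + b - a = d := by omega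
    exact key12 d ⟨he ▸ Set.sub_mem_sub (Set.add_mem_add h3 h2) h1, h4⟩
  -- (1,1,2,1)
  · exfalso
    have he : a + d - b = c := by omega
    exact key12 c ⟨he ▸ Set.sub_mem_sub (Set.add_mem_add h1 h4) h2, h3⟩
  -- (1,1,2,2)
  · exfalso
    exact hu (by rw [← hpu]; exact keyd _ ⟨Set.sub_mem_sub h1 h2,
      (by have : c - d = a - b := by omega
          exact this ▸ Set.sub_mem_sub h3 h4)⟩)
  -- (1,2,1,1)
  · exfalso
    have he : a + d - c = b := by omega
    exact key12 b ⟨he ▸ Set.sub_mem_sub (Set.add_mem_add h1 h4) h3, h2⟩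
  -- (1,2,1,2)
  · have h0 : a - c = 0 := keyd _ ⟨Set.sub_mem_sub h1 h3,
      (by have : b - d = a - c := by omega
          exact this ▸ Set.sub_mem_sub h2 h4)⟩
    exact Prod.ext (by omega) (by omega)
  -- (1,2,2,1)
  · exfalso
    exact keys (a + d) ⟨Set.add_mem_add h1 h4,
      (by have : b + c = a + d := by omega
          exact this ▸ Set.add_mem_add h2 h3)⟩
  -- (1,2,2,2)
  · exfalso
    have he : c + b - d = a := by omega
    exact key21 a ⟨he ▸ Set.sub_mem_sub (Set.add_mem_add h3 h2) h4, h1⟩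
  -- (2,1,1,1)
  · exfalso
    have he : c + b - d = a := by omega
    exact key12 a ⟨he ▸ Set.sub_mem_sub (Set.add_mem_add h3 h2) h4, h1⟩
  -- (2,1,1,2)
  · exfalso
    exact keys (c + b) ⟨Set.add_mem_add h3 h2,
      (by have : a + d = c + b := by omega
          exact this ▸ Set.add_mem_add h1 h4)⟩
  -- (2,1,2,1)
  · have h0 : b - d = 0 := keyd _ ⟨Set.sub_mem_sub h2 h4,
      (by have : a - c = b - d := by omega
          exact this ▸ Set.sub_mem_sub h1 h3)⟩
    exact Prod.ext (by omega) (by omega)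
  -- (2,1,2,2)
  · exfalso
    have he : a + d - c = b := by omega
    exact key21 b ⟨he ▸ Set.sub_mem_sub (Set.add_mem_add h1 h4) h3, h2⟩
  -- (2,2,1,1)
  · exfalso
    exact hu (by rw [← hpu]; exact keyd _ ⟨(by
        have : c - d = a - b := by omega
        exact this ▸ Set.sub_mem_sub h3 h4), Set.sub_mem_sub h1 h2⟩)
  -- (2,2,1,2)
  · exfalso
    have he : a + d - b = c := by omega
    exact key21 c ⟨he ▸ Set.sub_mem_sub (Set.add_mem_add h1 h4) h2, h3⟩
  -- (2,2,2,1)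
  · exfalso
    have he : c + b - a = d := by omega
    exact key21 d ⟨he ▸ Set.sub_mem_sub (Set.add_mem_add h3 h2) h1, h4⟩
  -- (2,2,2,2)
  · exact h₂ u hu ⟨h1, h2, hpu⟩ ⟨h3, h4, hqu⟩
end

section
/- For each odd prime p there exists a Sidon set B_p ⊆ [1, p²] such that (B_p − B_p) ∩ [−√p, √p] = {0} and |B_p| > p − 2√p. -/
open Pointwise

/-!
For a unit `g` of order `n` in `(ZMod p)ˣ`, Ruzsa's set consists of the `m ∈ [0, n p)` with
`m ≡ g ^ m (mod p)`; by the Chinese remainder theorem it meets every residue class modulo `n`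
exactly once. If `a + b = c + d` in it, then `g ^ a + g ^ b = g ^ c + g ^ d` and
`g ^ a * g ^ b = g ^ c * g ^ d` in `ZMod p`, so `{g ^ a, g ^ b} = {g ^ c, g ^ d}`; and
`g ^ a = g ^ c` forces `a ≡ c` modulo both `n` and `p`, hence `a = c`. For a generator `g`,
shifted by one, this is a Sidon set of `p - 1` elements of `[1, p²]`.

Then delete every element lying at distance at most `k = ⌊√p⌋` above another one. The Sidon
property makes these distances distinct, so at most `k` elements are deleted, and the minimum
always survives.
-/
theorem IsSidonSet.mono {B C : Set ℤ} (hC : IsSidonSet C) (h : B ⊆ C) : IsSidonSet B :=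
  fun u hu _ hx _ hy => hC u hu ⟨h hx.1, h hx.2.1, hx.2.2⟩ ⟨h hy.1, h hy.2.1, hy.2.2⟩

theorem IsSidonSet.image_add_const {B : Set ℤ} (hB : IsSidonSet B) (c : ℤ) :
    IsSidonSet ((· + c) '' B) := by
  rintro u hu ⟨-, -⟩ ⟨⟨a, ha, rfl⟩, ⟨b, hb, rfl⟩, hab⟩ ⟨-, -⟩ ⟨⟨a', ha', rfl⟩, ⟨b', hb', rfl⟩, hab'⟩
  have h := hB u hu (x := (a, b)) ⟨ha, hb, by simpa using hab⟩ (y := (a', b'))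
    ⟨ha', hb', by simpa using hab'⟩
  simp_all

theorem isSidonSet_of_add_eq_add {B : Set ℤ}
    (h : ∀ a ∈ B, ∀ b ∈ B, ∀ c ∈ B, ∀ d ∈ B, a + b = c + d → a = c ∨ a = d) :
    IsSidonSet B := by
  rintro u hu ⟨a, b⟩ ⟨ha, hb, hab⟩ ⟨c, d⟩ ⟨hc, hd, hcd⟩
  dsimp only at *
  rcases h a ha d hd c hc b hb (by linarith) with rfl | rfl
  · simp only [Prod.mk.injEq, true_and]; linarith
  · exact absurd hab (by simpa using hu.symm)

theorem eq_or_eq_of_add_eq_add_of_mul_eq_mul {R : Type*} [CommRing R] [NoZeroDivisors R]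
    {s t s' t' : R} (hadd : s + t = s' + t') (hmul : s * t = s' * t') : s = s' ∨ s = t' := by
  have h : (s - s') * (s - t') = 0 := by
    linear_combination s * hadd - hmul
  simpa [sub_eq_zero] using h

def ruzsaSet (p : ℕ) (g : (ZMod p)ˣ) : Set ℤ :=
  {m | 0 ≤ m ∧ m < orderOf g * p ∧ (m : ZMod p) = ((g ^ m : (ZMod p)ˣ) : ZMod p)}

namespace ruzsaSet

variable {p : ℕ} [Fact p.Prime] (g : (ZMod p)ˣ)

theorem coprime_orderOf : (orderOf g).Coprime p := by
  have hp : p.Prime := Fact.out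
  have hlt : orderOf g < p :=
    (Nat.le_of_dvd (Nat.sub_pos_of_lt hp.one_lt) (ZMod.card_units p ▸ orderOf_dvd_card)).trans_lt
      (Nat.sub_lt hp.pos one_pos)
  exact Nat.coprime_comm.mp <| hp.coprime_iff_not_dvd.mpr
    fun h => (Nat.le_of_dvd (orderOf_pos g) h).not_gt hlt

variable {g}

theorem subset_Ico : ruzsaSet p g ⊆ Set.Ico 0 (orderOf g * p) := fun _ hm => ⟨hm.1, hm.2.1⟩

theorem eq_of_zpow_eq {a c : ℤ} (ha : a ∈ ruzsaSet p g) (hc : c ∈ ruzsaSet p g)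
    (h : g ^ a = g ^ c) : a = c := by
  have hn : a ≡ c [ZMOD orderOf g] := zpow_eq_zpow_iff_modEq.mp h
  have hp : a ≡ c [ZMOD p] := by
    rw [← ZMod.intCast_eq_intCast_iff, ha.2.2, hc.2.2, h]
  have hnp : a ≡ c [ZMOD orderOf g * p] :=
    (Int.modEq_and_modEq_iff_modEq_mul (by simpa using coprime_orderOf g)).mp ⟨hn, hp⟩
  rwa [Int.ModEq, Int.emod_eq_of_lt ha.1 ha.2.1, Int.emod_eq_of_lt hc.1 hc.2.1] at hnp

theorem isSidonSet : IsSidonSet (ruzsaSet p g) := by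
  refine isSidonSet_of_add_eq_add fun a ha b hb c hc d hd habcd => ?_
  let u : ℤ → ZMod p := fun m => ((g ^ m : (ZMod p)ˣ) : ZMod p)
  have hadd : u a + u b = u c + u d := by
    simp only [u, ← ha.2.2, ← hb.2.2, ← hc.2.2, ← hd.2.2]
    exact_mod_cast congrArg (Int.cast : ℤ → ZMod p) habcd
  have hmul : u a * u b = u c * u d := by
    simp only [u, ← Units.val_mul, ← zpow_add, habcd]
  refine (eq_or_eq_of_add_eq_add_of_mul_eq_mul hadd hmul).imp ?_ ?_ <;>
    exact fun h => eq_of_zpow_eq ‹_› ‹_› (Units.ext h)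

theorem ncard_eq : (ruzsaSet p g).ncard = orderOf g := by
  have : NeZero (orderOf g) := ⟨(orderOf_pos g).ne'⟩
  have hcop := coprime_orderOf g
  rw [← Nat.card_zmod (orderOf g), ← Set.ncard_univ]
  refine Set.ncard_congr (fun m _ => (m : ZMod (orderOf g))) (fun _ _ => Set.mem_univ _)
    (fun a c ha hc h => eq_of_zpow_eq ha hc ?_) fun x _ => ?_
  · exact zpow_eq_zpow_iff_modEq.mpr ((ZMod.intCast_eq_intCast_iff _ _ _).mp h)
  set k := Nat.chineseRemainder hcop x.val (g ^ x.val : (ZMod p)ˣ).val.val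
  have hk_n : k ≡ x.val [MOD orderOf g] := k.2.1
  have hk_p : k ≡ (g ^ x.val : (ZMod p)ˣ).val.val [MOD p] := k.2.2
  have hk_pow : g ^ (k : ℕ) = g ^ x.val := pow_eq_pow_iff_modEq.mpr hk_n
  refine ⟨k, ⟨Int.natCast_nonneg _, ?_, ?_⟩, ?_⟩
  · exact_mod_cast Nat.chineseRemainder_lt_mul hcop _ _ (NeZero.ne _) (Fact.out : p.Prime).ne_zero
  · rw [zpow_natCast, hk_pow, Int.cast_natCast, (ZMod.natCast_eq_natCast_iff _ _ _).mpr hk_p,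
      ZMod.natCast_zmod_val]
  · rw [Int.cast_natCast, (ZMod.natCast_eq_natCast_iff _ _ _).mpr hk_n, ZMod.natCast_zmod_val]

end ruzsaSet

def crowded (B : Set ℤ) (k : ℕ) : Set ℤ := {b ∈ B | ∃ b' ∈ B, 0 < b - b' ∧ b - b' ≤ k}

section crowded

variable {B : Set ℤ} {k : ℕ}

theorem IsSidonSet.ncard_crowded_le (hB : IsSidonSet B) : (crowded B k).ncard ≤ k := by
  choose! w hw using fun b (hb : b ∈ crowded B k) => hb.2
  have hinj : Set.InjOn (fun b => b - w b) (crowded B k) := fun b hb c hc hbc =>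
    congrArg Prod.fst <|
      hB _ (hw b hb).2.1.ne' (x := (b, w b)) (y := (c, w c)) ⟨hb.1, (hw b hb).1, rfl⟩
        ⟨hc.1, (hw c hc).1, hbc.symm⟩
  calc (crowded B k).ncard ≤ (Set.Icc (1 : ℤ) k).ncard :=
        Set.ncard_le_ncard_of_injOn _ (fun b hb => ⟨(hw b hb).2.1, (hw b hb).2.2⟩) hinj
    _ = k := by rw [← Finset.coe_Icc, Set.ncard_coe_finset, Int.card_Icc]; simp

theorem IsSidonSet.ncard_le_ncard_diff_crowded_add (hB : IsSidonSet B) (hfin : B.Finite) :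
    B.ncard ≤ (B \ crowded B k).ncard + k := by
  rw [← Set.ncard_sdiff_add_ncard_of_subset (fun _ hb => hb.1 : crowded B k ⊆ B) hfin]
  exact Nat.add_le_add_left hB.ncard_crowded_le _

theorem eq_of_mem_diff_crowded {a b : ℤ} (ha : a ∈ B \ crowded B k) (hb : b ∈ B \ crowded B k)
    (hab : |a - b| ≤ k) : a = b := by
  by_contra hne
  rcases lt_or_gt_of_ne hne with h | h
  · exact hb.2 ⟨hb.1, a, ha.1, by linarith, (abs_sub_comm a b ▸ le_abs_self (b - a)).trans hab⟩
  · exact ha.2 ⟨ha.1, b, hb.1, by linarith, (le_abs_self _).trans hab⟩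

theorem Set.Finite.diff_crowded_nonempty (hfin : B.Finite) (hne : B.Nonempty) :
    (B \ crowded B k).Nonempty := by
  obtain ⟨m, hm, hmin⟩ := Set.exists_min_image B id hfin hne
  exact ⟨m, hm, fun ⟨_, b', hb', hpos, _⟩ => (hmin b' hb').not_gt (by simpa using hpos)⟩

end crowded

theorem abs_intCast_le_sqrt_iff {u : ℤ} {n : ℕ} : |(u : ℝ)| ≤ √(n : ℝ) ↔ |u| ≤ Nat.sqrt n := by
  rw [← Int.cast_abs, ← Int.le_floor, Real.floor_real_sqrt_eq_nat_sqrt]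

theorem stmt_8_general (p : ℕ) (hp : p.Prime) :
    ∃ B : Set ℤ, B.Finite ∧ IsSidonSet B ∧
      (∀ b ∈ B, 1 ≤ b ∧ b ≤ (p : ℤ) ^ 2) ∧
      ((B - B) ∩ {u : ℤ | |(u : ℝ)| ≤ Real.sqrt p} = {0}) ∧
      (B.ncard : ℝ) > p - 2 * Real.sqrt p := by
  have := Fact.mk hp
  obtain ⟨g, hg⟩ := IsCyclic.exists_ofOrder_eq_natCard (α := (ZMod p)ˣ)
  rw [Nat.card_eq_fintype_card, ZMod.card_units] at hg
  set R := (· + 1) '' ruzsaSet p g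
  have hR : IsSidonSet R := ruzsaSet.isSidonSet.image_add_const 1
  have hRfin : R.Finite := ((Set.finite_Ico _ _).subset ruzsaSet.subset_Ico).image _
  set B := R \ crowded R (Nat.sqrt p)
  have hRcard : R.ncard = p - 1 := by
    rw [Set.ncard_image_of_injective _ (add_left_injective 1), ruzsaSet.ncard_eq, hg]
  have hRne : R.Nonempty := Set.nonempty_of_ncard_ne_zero (by have := hp.two_le; omega)
  have hcard : p - 1 ≤ B.ncard + Nat.sqrt p :=
    hRcard ▸ hR.ncard_le_ncard_diff_crowded_add hRfin
  refine ⟨B, hRfin.sdiff, hR.mono Set.sdiff_subset, ?_, ?_, ?_⟩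
  · rintro _ ⟨⟨m, hm, rfl⟩, -⟩
    have hm' := ruzsaSet.subset_Ico hm
    rw [hg, Set.mem_Ico, Nat.cast_sub hp.one_le] at hm'
    constructor <;> nlinarith
  · refine Set.Subset.antisymm ?_ ?_
    · rintro _ ⟨⟨a, ha, b, hb, rfl⟩, hab⟩
      simp [eq_of_mem_diff_crowded ha hb (abs_intCast_le_sqrt_iff.mp hab)]
    · rintro _ rfl
      obtain ⟨b, hb⟩ := hRfin.diff_crowded_nonempty (k := Nat.sqrt p) hRne
      exact ⟨⟨b, hb, b, hb, sub_self b⟩, by simp⟩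
  · have h1 : (1 : ℝ) < √p := by
      rw [Real.lt_sqrt zero_le_one]; exact_mod_cast hp.one_lt
    have h2 : (p : ℝ) - 1 ≤ B.ncard + Nat.sqrt p := by
      rw [← Nat.cast_one, ← Nat.cast_sub hp.one_le]; exact_mod_cast hcard
    linarith [Real.nat_sqrt_le_real_sqrt (a := p)]

theorem stmt_8 (p : ℕ) (hp : p.Prime) (hodd : Odd p) :
    ∃ B : Set ℤ, B.Finite ∧ IsSidonSet B ∧
      (∀ b ∈ B, 1 ≤ b ∧ b ≤ (p : ℤ) ^ 2) ∧
      ((B - B) ∩ {u : ℤ | |(u : ℝ)| ≤ Real.sqrt p} = {0}) ∧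
      (B.ncard : ℝ) > p - 2 * Real.sqrt p :=
  stmt_8_general p hp
end

section
/- There exists a perfect difference set A ⊆ ℕ such that A(x) ≫ x^{1/3}. -/
namespace PDS

def diffs (S : Finset ℤ) : Finset ℤ := (S ×ˢ S).image fun p => p.1 - p.2

def Sidon (S : Finset ℤ) : Prop :=
  ∀ a ∈ S, ∀ b ∈ S, ∀ c ∈ S, ∀ e ∈ S, a - b = c - e → a - b ≠ 0 → a = c ∧ b = e

lemma mem_diffs {S : Finset ℤ} {a b : ℤ} (ha : a ∈ S) (hb : b ∈ S) : a - b ∈ diffs S := by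
  unfold diffs
  rw [Finset.mem_image]
  exact ⟨(a, b), Finset.mem_product.mpr ⟨ha, hb⟩, rfl⟩

lemma diffs_mono {S T : Finset ℤ} (h : S ⊆ T) : diffs S ⊆ diffs T := by
  intro w hw
  unfold diffs at hw
  rw [Finset.mem_image] at hw
  obtain ⟨p, hp, rfl⟩ := hw
  rw [Finset.mem_product] at hp
  exact mem_diffs (h hp.1) (h hp.2)

lemma card_diffs (S : Finset ℤ) : (diffs S).card ≤ S.card * S.card := by
  calc (diffs S).card ≤ (S ×ˢ S).card := Finset.card_image_le
    _ = S.card * S.card := Finset.card_product S S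

structure Inv (k : ℕ) (S : Finset ℤ) : Prop where
  sidon : Sidon S
  pos : ∀ a ∈ S, 0 < a
  bdd : ∀ a ∈ S, a ≤ 30*((k:ℤ)+1)^3
  card_eq : S.card = 2*k+1
  cover : ∀ u : ℤ, 0 < u → u ≤ (k:ℤ) → u ∈ diffs S

lemma inv_base : Inv 0 ({1} : Finset ℤ) := by
  constructor
  · intro a ha b hb c hc e he heq hne
    simp only [Finset.mem_singleton] at ha hb hc he
    omega
  · intro a ha; simp at ha; omega
  · intro a ha; simp at ha; omega
  · simp
  · intro u hu hu'; omega

lemma exists_avoid (F : Finset ℤ) : ∃ y : ℤ, 0 < y ∧ y ≤ F.card + 1 ∧ y ∉ F := by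
  have hcard : (Finset.Ioc (0:ℤ) (F.card + 1)).card = F.card + 1 := by
    rw [Int.card_Ioc]; simp
  by_contra h
  push_neg at h
  have hsub : Finset.Ioc (0:ℤ) (F.card + 1) ⊆ F := by
    intro y hy
    rw [Finset.mem_Ioc] at hy
    exact h y hy.1 hy.2
  have := Finset.card_le_card hsub
  omega

/-- There is a small `y` such that the pair `y, y+d` can be added. -/

lemma exists_good_y (S : Finset ℤ) {d : ℤ} (hd : 0 < d) :
    ∃ y : ℤ, 0 < y ∧
      y ≤ 2*(S.card:ℤ)^3 + 5*(S.card:ℤ)^2 + 6*(S.card:ℤ) + 1 ∧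
      y ∉ S ∧ y + d ∉ S ∧
      (∀ a ∈ S, (y - a ∉ diffs S ∧ y - a ≠ d ∧ y - a ≠ -d) ∧
                (y + d - a ∉ diffs S ∧ y + d - a ≠ d ∧ y + d - a ≠ -d)) ∧
      (∀ a ∈ S, ∀ b ∈ S, 2*y ≠ a + b ∧ 2*y + 2*d ≠ a + b ∧ 2*y + d ≠ a + b) := by
  classical
  set n : ℤ := (S.card : ℤ) with hn
  have hn0 : 0 ≤ n := by positivity
  set D' : Finset ℤ := insert d (insert (-d) (diffs S)) with hD'
  have hD'card : (D' : Finset ℤ).card ≤ n^2 + 2 := by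
    have h1 : D'.card ≤ (diffs S).card + 2 := by
      calc D'.card ≤ (insert (-d) (diffs S)).card + 1 := Finset.card_insert_le _ _
        _ ≤ (diffs S).card + 1 + 1 := by
            have := Finset.card_insert_le (-d) (diffs S); omega
    have h2 := card_diffs S
    have : ((diffs S).card : ℤ) ≤ n^2 := by push_cast [hn]; nlinarith [h2]
    have : (D'.card : ℤ) ≤ n^2 + 2 := by push_cast at h1 ⊢; omega
    exact_mod_cast this
  set F1 : Finset ℤ := S.biUnion (fun a => D'.biUnion (fun e => {e + a, e + a - d})) with hF1
  set F2 : Finset ℤ := S ∪ S.image (fun a => a - d) with hF2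
  set F3 : Finset ℤ :=
    (S ×ˢ S).biUnion (fun p =>
      ({p.1 + p.2, p.1 + p.2 - 2*d, p.1 + p.2 - d} : Finset ℤ).image (· / 2)) with hF3
  set F : Finset ℤ := F1 ∪ F2 ∪ F3 with hF
  have hF1card : (F1.card : ℤ) ≤ n * (n^2 + 2) * 2 := by
    have : F1.card ≤ S.card * (D'.card * 2) := by
      apply le_trans (Finset.card_biUnion_le)
      apply le_trans (Finset.sum_le_card_nsmul _ _ (D'.card * 2) ?_)
      · simp [mul_comm]
      · intro a _
        apply le_trans (Finset.card_biUnion_le)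
        apply le_trans (Finset.sum_le_card_nsmul _ _ 2 ?_)
        · simp [mul_comm]
        · intro e _
          exact Finset.card_insert_le _ _ |>.trans (by simp)
    calc (F1.card : ℤ) ≤ (S.card : ℤ) * (D'.card * 2) := by exact_mod_cast this
      _ ≤ n * ((n^2+2) * 2) := by
          apply mul_le_mul_of_nonneg_left _ hn0
          have : (D'.card : ℤ) ≤ n^2+2 := hD'card
          nlinarith
      _ = n * (n^2+2) * 2 := by ring
  have hF2card : (F2.card : ℤ) ≤ 2 * n := by
    have : F2.card ≤ S.card + S.card := by
      apply le_trans (Finset.card_union_le _ _)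
      have := Finset.card_image_le (f := fun a => a - d) (s := S)
      omega
    push_cast [hn]
    exact_mod_cast le_trans (by exact_mod_cast this) (by omega)
  have hF3card : (F3.card : ℤ) ≤ n^2 * 3 := by
    have : F3.card ≤ (S ×ˢ S).card * 3 := by
      apply le_trans (Finset.card_biUnion_le)
      apply le_trans (Finset.sum_le_card_nsmul _ _ 3 ?_)
      · simp [mul_comm]
      · intro p _
        apply le_trans (Finset.card_image_le)
        apply le_trans (Finset.card_insert_le _ _)
        have := Finset.card_insert_le (p.1 + p.2 - 2*d) ({p.1 + p.2 - d} : Finset ℤ)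
        simp at this ⊢
        omega
    have hc : ((S ×ˢ S).card : ℤ) = n * n := by rw [Finset.card_product]; push_cast [hn]; ring
    calc (F3.card : ℤ) ≤ ((S ×ˢ S).card : ℤ) * 3 := by exact_mod_cast this
      _ = n * n * 3 := by rw [hc]
      _ ≤ n^2 * 3 := by nlinarith
  have hFcard : (F.card : ℤ) ≤ 2*n^3 + 5*n^2 + 6*n := by
    have h1 : F.card ≤ F1.card + F2.card + F3.card := by
      apply le_trans (Finset.card_union_le _ _)
      have := Finset.card_union_le F1 F2
      omega
    have : (F.card : ℤ) ≤ (F1.card : ℤ) + F2.card + F3.card := by exact_mod_cast h1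
    nlinarith
  obtain ⟨y, hy0, hyle, hyF⟩ := exists_avoid F
  have hyF1 : y ∉ F1 := fun h => hyF (by simp [hF, h])
  have hyF2 : y ∉ F2 := fun h => hyF (by simp [hF, h])
  have hyF3 : y ∉ F3 := fun h => hyF (by simp [hF, h])
  refine ⟨y, hy0, by omega, ?_, ?_, ?_, ?_⟩
  · intro hyS
    exact hyF2 (Finset.mem_union_left _ hyS)
  · intro hzS
    apply hyF2
    apply Finset.mem_union_right
    exact Finset.mem_image.mpr ⟨y + d, hzS, by ring⟩
  · intro a ha
    have hmemF1 : ∀ e ∈ D', y ≠ e + a ∧ y ≠ e + a - d := by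
      intro e he
      constructor <;> intro hcon <;> apply hyF1 <;>
        exact Finset.mem_biUnion.mpr ⟨a, ha, Finset.mem_biUnion.mpr ⟨e, he, by simp [hcon]⟩⟩
    have hd1 : d ∈ D' := by simp [hD']
    have hd2 : -d ∈ D' := by simp [hD']
    have hdiff : ∀ w ∈ diffs S, w ∈ D' := by intro w hw; simp [hD', hw]
    refine ⟨⟨?_, ?_, ?_⟩, ⟨?_, ?_, ?_⟩⟩
    · intro hcon; exact ((hmemF1 _ (hdiff _ hcon)).1) (by ring)
    · intro hcon; exact ((hmemF1 _ hd1).1) (by omega)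
    · intro hcon; exact ((hmemF1 _ hd2).1) (by omega)
    · intro hcon; exact ((hmemF1 _ (hdiff _ hcon)).2) (by omega)
    · intro hcon; exact ((hmemF1 _ hd1).2) (by omega)
    · intro hcon; exact ((hmemF1 _ hd2).2) (by omega)
  · intro a ha b hb
    have hmemF3 : ∀ m ∈ ({a + b, a + b - 2*d, a + b - d} : Finset ℤ), y ≠ m / 2 := by
      intro m hm hcon
      apply hyF3
      apply Finset.mem_biUnion.mpr
      exact ⟨(a, b), Finset.mem_product.mpr ⟨ha, hb⟩, Finset.mem_image.mpr ⟨m, by simpa using hm, hcon.symm⟩⟩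
    refine ⟨?_, ?_, ?_⟩
    · intro hcon
      exact hmemF3 (a+b) (by simp) (by omega)
    · intro hcon
      exact hmemF3 (a+b-2*d) (by simp) (by omega)
    · intro hcon
      exact hmemF3 (a+b-d) (by simp) (by omega)


lemma sidon_insert {S : Finset ℤ} (hS : Sidon S) {d y : ℤ} (hd : 0 < d)
    (hdn : d ∉ diffs S) (hyS : y ∉ S) (hzS : y + d ∉ S)
    (h2 : ∀ a ∈ S, (y - a ∉ diffs S ∧ y - a ≠ d ∧ y - a ≠ -d) ∧
                   (y + d - a ∉ diffs S ∧ y + d - a ≠ d ∧ y + d - a ≠ -d))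
    (h3 : ∀ a ∈ S, ∀ b ∈ S, 2*y ≠ a + b ∧ 2*y + 2*d ≠ a + b ∧ 2*y + d ≠ a + b) :
    Sidon (insert y (insert (y + d) S)) := by
  -- linear-friendly expanded facts
  have hdn2 : ∀ s ∈ S, ∀ t ∈ S, s - t ≠ d ∧ s - t ≠ -d := by
    intro s hs t ht
    constructor
    · intro h; exact hdn (h ▸ mem_diffs hs ht)
    · intro h
      have h' : t - s = d := by omega
      exact hdn (h' ▸ mem_diffs ht hs)
  have h2' : ∀ s ∈ S, ∀ t ∈ S, ∀ r ∈ S,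
      (y - s ≠ t - r ∧ y - s ≠ r - t) ∧ (y + d - s ≠ t - r ∧ y + d - s ≠ r - t) := by
    intro s hs t ht r hr
    obtain ⟨⟨q1, -⟩, ⟨q4, -⟩⟩ := h2 s hs
    refine ⟨⟨fun h => q1 (h ▸ mem_diffs ht hr), fun h => q1 (h ▸ mem_diffs hr ht)⟩,
           ⟨fun h => q4 (h ▸ mem_diffs ht hr), fun h => q4 (h ▸ mem_diffs hr ht)⟩⟩
  have h2'' : ∀ s ∈ S, (y - s ≠ d ∧ y - s ≠ -d) ∧ (y + d - s ≠ d ∧ y + d - s ≠ -d) := by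
    intro s hs
    obtain ⟨⟨-, q2, q3⟩, ⟨-, q5, q6⟩⟩ := h2 s hs
    exact ⟨⟨q2, q3⟩, ⟨q5, q6⟩⟩
  have hmem : ∀ s ∈ S, s ≠ y ∧ s ≠ y + d := by
    intro s hs
    exact ⟨fun h => hyS (h ▸ hs), fun h => hzS (h ▸ hs)⟩
  intro a ha b hb c hc e he heq hne
  simp only [Finset.mem_insert] at ha hb hc he
  rcases ha with ha | ha | ha <;> rcases hb with hb | hb | hb <;>
    rcases hc with hc | hc | hc <;> rcases he with he | he | he <;>
  first
  | omega
  | exact hS a ha b hb c hc e he heq hne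
  | (have h9 := hdn2 a ha b hb; omega)
  | (have h9 := hdn2 a ha c hc; omega)
  | (have h9 := hdn2 a ha e he; omega)
  | (have h9 := hdn2 b hb c hc; omega)
  | (have h9 := hdn2 b hb e he; omega)
  | (have h9 := hdn2 c hc e he; omega)
  | (have h9 := h2' a ha c hc e he; omega)
  | (have h9 := h2' b hb c hc e he; omega)
  | (have h9 := h2' c hc a ha b hb; omega)
  | (have h9 := h2' e he a ha b hb; omega)
  | (have h9 := h2'' a ha; omega)
  | (have h9 := h2'' b hb; omega)
  | (have h9 := h2'' c hc; omega)
  | (have h9 := h2'' e he; omega)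
  | (have h9 := h3 a ha c hc; omega)
  | (have h9 := h3 a ha e he; omega)
  | (have h9 := h3 b hb c hc; omega)
  | (have h9 := h3 b hb e he; omega)
  | (have h9 := hmem a ha; omega)
  | (have h9 := hmem b hb; omega)
  | (have h9 := hmem c hc; omega)
  | (have h9 := hmem e he; omega)
  | (have h8 := hmem a ha; have h9 := hmem b hb; omega)
  | (have h8 := hmem c hc; have h9 := hmem e he; omega)


lemma inv_step (k : ℕ) (S : Finset ℤ) (h : Inv k S) :
    ∃ T : Finset ℤ, S ⊆ T ∧ Inv (k+1) T := by
  classical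
  -- choose the difference d to be represented
  have hdchoice : ∃ d : ℤ, 0 < d ∧ d ∉ diffs S ∧ d ≤ ((S.card:ℤ))^2 + 1 ∧
      ((k:ℤ)+1 ∈ diffs S ∨ d = (k:ℤ)+1) := by
    by_cases hk : ((k:ℤ)+1) ∈ diffs S
    · obtain ⟨d, hd0, hdle, hdn⟩ := exists_avoid (diffs S)
      refine ⟨d, hd0, hdn, ?_, Or.inl hk⟩
      have h1 := card_diffs S
      have h2 : ((diffs S).card : ℤ) ≤ (S.card:ℤ) * (S.card:ℤ) := by exact_mod_cast h1
      nlinarith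
    · refine ⟨(k:ℤ)+1, by positivity, hk, ?_, Or.inr rfl⟩
      have hc : S.card = 2*k+1 := h.card_eq
      have : ((S.card:ℤ)) = 2*(k:ℤ)+1 := by rw [hc]; push_cast; ring
      nlinarith [sq_nonneg ((k:ℤ))]
  obtain ⟨d, hd0, hdn, hdle, hcov1⟩ := hdchoice
  obtain ⟨y, hy0, hyle, hyS, hzS, h2, h3⟩ := exists_good_y S hd0
  refine ⟨insert y (insert (y + d) S), ?_, ?_⟩
  · intro a ha; simp [ha]
  have hsidon := sidon_insert h.sidon hd0 hdn hyS hzS h2 h3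
  have hyz : y ≠ y + d := by omega
  have hcard : (insert y (insert (y + d) S)).card = 2*(k+1)+1 := by
    rw [Finset.card_insert_of_notMem (by simp [hyz, hyS]),
        Finset.card_insert_of_notMem hzS, h.card_eq]
    ring
  -- bound for the new elements
  have hnval : ((S.card:ℤ)) = 2*(k:ℤ)+1 := by rw [h.card_eq]; push_cast; ring
  have hbound : y + d ≤ 30*((k:ℤ)+2)^3 := by
    have hk0 : (0:ℤ) ≤ (k:ℤ) := Int.ofNat_nonneg k
    rw [hnval] at hyle hdle
    have h16 : y + d ≤ 16*((k:ℤ)+1)^3 := by nlinarith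
    nlinarith [pow_nonneg hk0 3, sq_nonneg ((k:ℤ)+1), pow_nonneg (by linarith : (0:ℤ) ≤ (k:ℤ)+1) 3]
  constructor
  · exact hsidon
  · intro a ha
    simp only [Finset.mem_insert] at ha
    rcases ha with rfl | rfl | ha
    · omega
    · omega
    · exact h.pos a ha
  · intro a ha
    simp only [Finset.mem_insert] at ha
    have hk0 : (0:ℤ) ≤ (k:ℤ) := Int.ofNat_nonneg k
    have hmon : 30*((k:ℤ)+1)^3 ≤ 30*(((k:ℕ)+1:ℕ):ℤ)+0 ∨ True := Or.inr trivial
    rcases ha with rfl | rfl | ha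
    · have : ((k+1:ℕ):ℤ) + 1 = (k:ℤ)+2 := by push_cast; ring
      rw [this]; omega
    · have : ((k+1:ℕ):ℤ) + 1 = (k:ℤ)+2 := by push_cast; ring
      rw [this]; omega
    · have hb := h.bdd a ha
      have : ((k+1:ℕ):ℤ) + 1 = (k:ℤ)+2 := by push_cast; ring
      rw [this]
      nlinarith [hk0]
  · exact hcard
  · intro u hu hule
    have hsub : S ⊆ insert y (insert (y + d) S) := by intro a ha; simp [ha]
    by_cases hcase : u ≤ (k:ℤ)
    · exact diffs_mono hsub (h.cover u hu hcase)
    · have hu' : u = (k:ℤ)+1 := by push_cast at hule ⊢; omega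
      rcases hcov1 with hk1 | hk1
      · exact diffs_mono hsub (hu' ▸ hk1)
      · have hdm : d ∈ diffs (insert y (insert (y + d) S)) := by
          have := mem_diffs (S := insert y (insert (y + d) S))
            (a := y + d) (b := y) (by simp) (by simp)
          simpa using this
        rw [hu', ← hk1]
        exact hdm

noncomputable def seqP : (k : ℕ) → {S : Finset ℤ // Inv k S}
  | 0 => ⟨{1}, inv_base⟩
  | k+1 => ⟨(inv_step k (seqP k).1 (seqP k).2).choose,
            (inv_step k (seqP k).1 (seqP k).2).choose_spec.2⟩

noncomputable def seq (k : ℕ) : Finset ℤ := (seqP k).1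

lemma seq_inv (k : ℕ) : Inv k (seq k) := (seqP k).2

lemma seq_succ_subset (k : ℕ) : seq k ⊆ seq (k+1) :=
  (inv_step k (seqP k).1 (seqP k).2).choose_spec.1

lemma seq_mono {k m : ℕ} (h : k ≤ m) : seq k ⊆ seq m := by
  induction m with
  | zero => simpa [Nat.le_zero.mp h]
  | succ m ih =>
    rcases Nat.lt_or_ge k (m+1) with hlt | hge
    · exact (ih (Nat.lt_succ_iff.mp hlt)).trans (seq_succ_subset m)
    · have : k = m + 1 := le_antisymm h hge
      subst this; exact subset_rfl

def A : Set ℤ := {z | ∃ k, z ∈ seq k}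

lemma one_mem_A : (1 : ℤ) ∈ A := ⟨0, by simp [seq, seqP]⟩

lemma A_pos : ∀ a ∈ A, 0 < a := by
  rintro a ⟨k, hk⟩
  exact (seq_inv k).pos a hk

lemma A_perfect : ∀ u : ℤ, u ≠ 0 → ∃! p : ℤ × ℤ, p.1 ∈ A ∧ p.2 ∈ A ∧ p.1 - p.2 = u := by
  intro u hu
  -- existence
  have hexists : ∃ p : ℤ × ℤ, p.1 ∈ A ∧ p.2 ∈ A ∧ p.1 - p.2 = u := by
    rcases lt_or_gt_of_ne hu with hneg | hpos
    · have h0 : 0 < -u := by omega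
      have h1 : -u ≤ ((-u).toNat : ℤ) := by omega
      have := (seq_inv (-u).toNat).cover (-u) h0 h1
      unfold diffs at this
      rw [Finset.mem_image] at this
      obtain ⟨p, hp, hpe⟩ := this
      rw [Finset.mem_product] at hp
      exact ⟨(p.2, p.1), ⟨_, hp.2⟩, ⟨_, hp.1⟩, by omega⟩
    · have h1 : u ≤ (u.toNat : ℤ) := by omega
      have := (seq_inv u.toNat).cover u hpos h1
      unfold diffs at this
      rw [Finset.mem_image] at this
      obtain ⟨p, hp, hpe⟩ := this
      rw [Finset.mem_product] at hp
      exact ⟨(p.1, p.2), ⟨_, hp.1⟩, ⟨_, hp.2⟩, hpe⟩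
  obtain ⟨p, hp⟩ := hexists
  refine ⟨p, hp, ?_⟩
  rintro q ⟨⟨k1, hq1⟩, ⟨k2, hq2⟩, hq3⟩
  obtain ⟨⟨k3, hp1⟩, ⟨k4, hp2⟩, hp3⟩ := hp
  set m := max (max k1 k2) (max k3 k4) with hm
  have h1 : q.1 ∈ seq m := seq_mono (le_max_of_le_left (le_max_left _ _)) hq1
  have h2 : q.2 ∈ seq m := seq_mono (le_max_of_le_left (le_max_right _ _)) hq2
  have h3 : p.1 ∈ seq m := seq_mono (le_max_of_le_right (le_max_left _ _)) hp1
  have h4 : p.2 ∈ seq m := seq_mono (le_max_of_le_right (le_max_right _ _)) hp2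
  have := (seq_inv m).sidon q.1 h1 q.2 h2 p.1 h3 p.2 h4 (by omega) (by omega)
  exact Prod.ext this.1 this.2

lemma target_finite (x : ℝ) : ({a ∈ A | (a : ℝ) ≤ x}).Finite := by
  apply Set.Finite.subset (Set.finite_Icc (1:ℤ) ⌈x⌉)
  rintro a ⟨haA, hax⟩
  constructor
  · exact A_pos a haA
  · exact_mod_cast hax.trans (Int.le_ceil x)

lemma count_ge (k : ℕ) (x : ℝ) (hx : 30*((k:ℝ)+1)^3 ≤ x) :
    (2*(k:ℝ)+1) ≤ (({a ∈ A | (a : ℝ) ≤ x}).ncard : ℝ) := by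
  have hsub : (↑(seq k) : Set ℤ) ⊆ {a ∈ A | (a : ℝ) ≤ x} := by
    intro a ha
    rw [Finset.mem_coe] at ha
    refine ⟨⟨k, ha⟩, ?_⟩
    have hb := (seq_inv k).bdd a ha
    have : (a : ℝ) ≤ 30*((k:ℝ)+1)^3 := by exact_mod_cast hb
    linarith
  have hcard := Set.ncard_le_ncard hsub (target_finite x)
  rw [Set.ncard_coe_finset, (seq_inv k).card_eq] at hcard
  have : ((2*k+1 : ℕ) : ℝ) ≤ (({a ∈ A | (a : ℝ) ≤ x}).ncard : ℝ) := by exact_mod_cast hcard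
  push_cast at this
  linarith

lemma count_ge_one (x : ℝ) (hx : 1 ≤ x) :
    (1:ℝ) ≤ (({a ∈ A | (a : ℝ) ≤ x}).ncard : ℝ) := by
  have hsub : ({(1:ℤ)} : Set ℤ) ⊆ {a ∈ A | (a : ℝ) ≤ x} := by
    rintro a rfl
    exact ⟨one_mem_A, by exact_mod_cast hx⟩
  have hcard := Set.ncard_le_ncard hsub (target_finite x)
  rw [Set.ncard_singleton] at hcard
  exact_mod_cast hcard

lemma final : ∃ c : ℝ, 0 < c ∧ ∀ x : ℝ, 1 ≤ x →
    c * x ^ ((1 : ℝ) / 3) ≤ (({a ∈ A | (a : ℝ) ≤ x}).ncard : ℝ) := by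
  refine ⟨1/100, by norm_num, ?_⟩
  intro x hx
  have hx0 : (0:ℝ) < x := by linarith
  set t : ℝ := x ^ ((1:ℝ)/3) with ht
  have ht0 : 0 < t := Real.rpow_pos_of_pos hx0 _
  have ht3 : t^3 = x := by
    rw [ht, ← Real.rpow_natCast (x ^ ((1:ℝ)/3)) 3, ← Real.rpow_mul (le_of_lt hx0)]
    norm_num
  by_cases hcase : t ≤ 100
  · have := count_ge_one x hx
    nlinarith
  · push_neg at hcase
    set k : ℕ := ⌊t/100⌋₊ with hk
    have hfl : (k:ℝ) ≤ t/100 := Nat.floor_le (by positivity)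
    have hfl2 : t/100 < (k:ℝ) + 1 := Nat.lt_floor_add_one _
    have hkx : 30*((k:ℝ)+1)^3 ≤ x := by
      have h1 : (k:ℝ) + 1 ≤ t/50 := by
        have : (1:ℝ) ≤ t/100 := by linarith
        linarith
      have h2 : 30*((k:ℝ)+1)^3 ≤ 30*(t/50)^3 := by
        apply mul_le_mul_of_nonneg_left _ (by norm_num)
        apply pow_le_pow_left₀ (by positivity) h1
      have h3 : 30*(t/50)^3 ≤ t^3 := by nlinarith
      linarith [ht3 ▸ (h2.trans h3)]
    have := count_ge k x hkx
    have : t/100 ≤ 2*(k:ℝ)+1 := by linarith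
    linarith [count_ge k x hkx]

end PDS

/-- `A` is a perfect difference set: every nonzero integer has exactly one
representation as a difference of two elements of `A`. -/
def IsPerfectDifferenceSet (A : Set ℤ) : Prop :=
  ∀ u : ℤ, u ≠ 0 → ∃! p : ℤ × ℤ, p.1 ∈ A ∧ p.2 ∈ A ∧ p.1 - p.2 = u

theorem stmt_10 :
    ∃ A : Set ℤ, (∀ a ∈ A, 0 < a) ∧ IsPerfectDifferenceSet A ∧
      ∃ c : ℝ, 0 < c ∧ ∀ x : ℝ, 1 ≤ x →
        c * x ^ ((1 : ℝ) / 3) ≤ (({a ∈ A | (a : ℝ) ≤ x}).ncard : ℝ) := by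
  exact ⟨PDS.A, PDS.A_pos, PDS.A_perfect, PDS.final⟩
end

section
/- There exists a perfect difference set A ⊆ ℕ such that limsup_{x→∞} A(x)/√x ≥ 1/√2. -/
open Filter

/-!
The set is the increasing union of finite Sidon sets of positive integers. At stage `n` one first
makes `n` a difference by adding a far-away pair `{c, c + n}` (if `n` is not a difference yet), then
adds a translate, placed beyond everything so far, of Bose's Sidon set of `p` elements in
`[0, p²)` for a prime `p` much larger than the current set; the at most `|A|²` elements creating
a difference already present are deleted first. This gives about `p` elements below about `2p²`,
so `A(x) ≥ (1/√2 - o(1)) √x` at these `x`. A Sidon set has `A(x) ≤ 2√x`, so the `limsup` is finite,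
and a Sidon set in which every positive integer is a difference is a perfect difference set.
-/

open Pointwise

/-- Sidon sets in difference form: a nonzero difference comes from only one ordered pair. -/
def IsSidon {G : Type*} [AddGroup G] (A : Set G) : Prop :=
  ∀ a ∈ A, ∀ b ∈ A, ∀ c ∈ A, ∀ d ∈ A, a - b = c - d → a ≠ b → a = c ∧ b = d

section Sidon

variable {G : Type*} [AddGroup G]

theorem IsSidon.mono {A B : Set G} (hB : IsSidon B) (hAB : A ⊆ B) : IsSidon A :=
  fun a ha b hb c hc d hd => hB a (hAB ha) b (hAB hb) c (hAB hc) d (hAB hd)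

theorem isSidon_iUnion {ι : Type*} [SemilatticeSup ι] {A : ι → Set G} (hmono : Monotone A)
    (hA : ∀ i, IsSidon (A i)) : IsSidon (⋃ i, A i) := by
  intro a ha b hb c hc d hd
  obtain ⟨i, ha⟩ := Set.mem_iUnion.1 ha
  obtain ⟨j, hb⟩ := Set.mem_iUnion.1 hb
  obtain ⟨k, hc⟩ := Set.mem_iUnion.1 hc
  obtain ⟨l, hd⟩ := Set.mem_iUnion.1 hd
  exact hA (i ⊔ j ⊔ (k ⊔ l)) a (hmono (le_sup_left.trans le_sup_left) ha)
    b (hmono (le_sup_right.trans le_sup_left) hb) c (hmono (le_sup_left.trans le_sup_right) hc)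
    d (hmono (le_sup_right.trans le_sup_right) hd)

theorem IsSidon.injOn_offDiag {A : Set G} (hA : IsSidon A) :
    Set.InjOn (fun q : G × G => q.1 - q.2) A.offDiag := by
  rintro ⟨a, b⟩ ⟨ha, hb, hab⟩ ⟨c, d⟩ ⟨hc, hd, -⟩ h
  obtain ⟨rfl, rfl⟩ := hA a ha b hb c hc d hd h hab
  rfl

/-- Each `d ∈ D` is the difference of at most one pair of `B`; delete the first element of each such
pair. -/
theorem IsSidon.exists_subset_sub_mem_imp_eq [DecidableEq G] {B : Finset G}
    (hB : IsSidon (B : Set G)) (D : Finset G) :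
    ∃ B' ⊆ B, B.card ≤ B'.card + D.card ∧ ∀ b ∈ B', ∀ b' ∈ B', b - b' ∈ D → b = b' := by
  set bad := B.offDiag.filter (fun q => q.1 - q.2 ∈ D)
  refine ⟨B \ bad.image Prod.fst, Finset.sdiff_subset, ?_, ?_⟩
  · have hbad : bad.card ≤ D.card := by
      refine Finset.card_le_card_of_injOn (fun q => q.1 - q.2) (fun q hq => ?_) ?_
      · exact (Finset.mem_filter.1 hq).2
      · refine hB.injOn_offDiag.mono fun q hq => ?_
        simpa using (Finset.mem_filter.1 hq).1
    calc B.card ≤ (B \ bad.image Prod.fst).card + (bad.image Prod.fst).card :=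
          Finset.card_le_card_sdiff_add_card
      _ ≤ _ := Nat.add_le_add_left (Finset.card_image_le.trans hbad) _
  · intro b hb b' hb' hD
    by_contra hne
    refine (Finset.mem_sdiff.1 hb).2 (Finset.mem_image.2 ⟨(b, b'), ?_, rfl⟩)
    simp only [bad, Finset.mem_filter, Finset.mem_offDiag]
    exact ⟨⟨(Finset.mem_sdiff.1 hb).1, (Finset.mem_sdiff.1 hb').1, hne⟩, hD⟩

end Sidon

theorem isSidon_pair (n : ℤ) : IsSidon ({0, n} : Set ℤ) := by
  rintro a (rfl | rfl) b (rfl | rfl) c (rfl | rfl) d (rfl | rfl) <;> omega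

theorem IsSidon.union_image_add {A B : Set ℤ} {S M : ℤ} (hA : IsSidon A) (hB : IsSidon B)
    (hAS : A ⊆ Set.Icc 0 S) (hBM : B ⊆ Set.Icc 0 M)
    (hAB : ∀ a ∈ A, ∀ a' ∈ A, ∀ b ∈ B, ∀ b' ∈ B, a - a' = b - b' → b = b') :
    IsSidon (A ∪ (2 * S + M + 1 + ·) '' B) := by
  set c := 2 * S + M + 1 with hc
  have hmem : ∀ x ∈ A ∪ (c + ·) '' B,
      (x ∈ A ∧ 0 ≤ x ∧ x ≤ S) ∨ ∃ b ∈ B, 0 ≤ b ∧ b ≤ M ∧ c + b = x := by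
    rintro x (hx | ⟨b, hb, rfl⟩)
    · exact Or.inl ⟨hx, hAS hx⟩
    · exact Or.inr ⟨b, hb, (hBM hb).1, (hBM hb).2, rfl⟩
  intro x₁ hx₁ x₂ hx₂ x₃ hx₃ x₄ hx₄ h hne
  rcases hmem x₁ hx₁ with ⟨h₁, _⟩ | ⟨b₁, h₁, _, _, rfl⟩ <;>
  rcases hmem x₂ hx₂ with ⟨h₂, _⟩ | ⟨b₂, h₂, _, _, rfl⟩ <;>
  rcases hmem x₃ hx₃ with ⟨h₃, _⟩ | ⟨b₃, h₃, _, _, rfl⟩ <;>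
  rcases hmem x₄ hx₄ with ⟨h₄, _⟩ | ⟨b₄, h₄, _, _, rfl⟩
  -- Differences within `A`, within the translate of `B`, and across the gap lie in disjoint
  -- ranges; this settles ten of the sixteen cases.
  all_goals try omega
  · exact hA _ h₁ _ h₂ _ h₃ _ h₄ h hne
  · exact absurd (hAB _ h₁ _ h₂ _ h₃ _ h₄ (by omega)) (by omega)
  · have := hAB _ h₁ _ h₃ _ h₂ _ h₄ (by omega); omega
  · have := hAB _ h₄ _ h₂ _ h₃ _ h₁ (by omega); omega
  · have := hAB _ h₃ _ h₄ _ h₁ _ h₂ (by omega); omega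
  · have := hB _ h₁ _ h₂ _ h₃ _ h₄ (by omega) (by omega); omega

theorem eq_or_eq_of_sub_mul_sub_eq {F K : Type*} [Field F] [Field K] [Algebra F K] {θ : K}
    (hθ : θ ∉ Set.range (algebraMap F K)) {a b c d : F}
    (h : (θ - algebraMap F K a) * (θ - algebraMap F K d) =
      (θ - algebraMap F K b) * (θ - algebraMap F K c)) :
    a = b ∨ a = c := by
  have hlin : (b + c - (a + d)) • θ = algebraMap F K (b * c - a * d) := by
    rw [Algebra.smul_def]
    simp only [map_sub, map_add, map_mul]
    linear_combination h
  have hsum : b + c = a + d := by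
    by_contra hne
    have hne' : b + c - (a + d) ≠ 0 := sub_ne_zero.2 hne
    refine hθ ⟨(b + c - (a + d))⁻¹ * (b * c - a * d), ?_⟩
    rw [map_mul, ← hlin, Algebra.smul_def, ← mul_assoc, ← map_mul, inv_mul_cancel₀ hne',
      map_one, one_mul]
  have hprod : b * c = a * d := by
    rw [hsum, sub_self, zero_smul, eq_comm, map_eq_zero] at hlin
    exact sub_eq_zero.1 hlin
  have : (a - b) * (a - c) = 0 := by linear_combination (-a) * hsum + hprod
  simpa [sub_eq_zero] using this

/-- Bose's construction: the discrete logarithms of `θ - a`, `a ∈ F`, for `θ` outside `F`. -/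
theorem exists_isSidon_of_card_lt {F K : Type*} [Field F] [Finite F] [Field K] [Finite K]
    [Algebra F K] (hFK : Nat.card F < Nat.card K) :
    ∃ B : Finset ℤ, (B : Set ℤ) ⊆ Set.Icc 0 (Nat.card K - 2) ∧ B.card = Nat.card F ∧
      IsSidon (B : Set ℤ) := by
  have := Fintype.ofFinite F
  obtain ⟨θ, hθ⟩ : ∃ θ : K, θ ∉ Set.range (algebraMap F K) := by
    by_contra! h
    exact hFK.not_ge (Nat.card_le_card_of_surjective _ fun x => h x)
  obtain ⟨g, hg⟩ := IsCyclic.exists_monoid_generator (α := Kˣ)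
  have hlog : ∀ a : F, ∃ n < Nat.card K - 1, (g : K) ^ n = θ - algebraMap F K a := by
    intro a
    have hne : θ - algebraMap F K a ≠ 0 := sub_ne_zero.2 fun h => hθ ⟨a, h.symm⟩
    obtain ⟨n, hn⟩ := (Submonoid.mem_powers_iff _ _).1 (hg (Units.mk0 _ hne))
    refine ⟨n % orderOf g, ?_, ?_⟩
    · calc n % orderOf g < orderOf g := Nat.mod_lt _ (orderOf_pos g)
        _ ≤ Nat.card Kˣ := orderOf_le_card
        _ = Nat.card K - 1 := Nat.card_units K
    · rw [← Units.val_pow_eq_pow_val, pow_mod_orderOf, hn, Units.val_mk0]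
  choose e he_lt he using hlog
  have he_inj : Function.Injective e := fun a b hab =>
    (algebraMap F K).injective (sub_right_injective ((he a).symm.trans (hab ▸ he b)))
  refine ⟨Finset.univ.image fun a => (e a : ℤ), ?_, ?_, ?_⟩
  · rintro _ hx
    obtain ⟨a, -, rfl⟩ := Finset.mem_image.1 hx
    have := he_lt a
    constructor <;> omega
  · rw [Finset.card_image_of_injective _ fun a b h => he_inj (by exact_mod_cast h),
      Finset.card_univ, Nat.card_eq_fintype_card]
  · simp only [Finset.coe_image, Finset.coe_univ, Set.image_univ]
    rintro _ ⟨a, rfl⟩ _ ⟨b, rfl⟩ _ ⟨c, rfl⟩ _ ⟨d, rfl⟩ h hne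
    dsimp only at h hne ⊢
    have hsum : e a + e d = e b + e c := by omega
    have hprod : (θ - algebraMap F K a) * (θ - algebraMap F K d) =
        (θ - algebraMap F K b) * (θ - algebraMap F K c) := by
      rw [← he, ← he, ← he, ← he, ← pow_add, ← pow_add, hsum]
    rcases eq_or_eq_of_sub_mul_sub_eq hθ hprod with rfl | rfl
    · exact absurd rfl hne
    · omega

theorem exists_isSidon_of_prime {p : ℕ} (hp : p.Prime) :
    ∃ B : Finset ℤ, (B : Set ℤ) ⊆ Set.Icc 0 (p ^ 2 - 2) ∧ B.card = p ∧ IsSidon (B : Set ℤ) := by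
  have := Fact.mk hp
  have hcard := GaloisField.card p 2 two_ne_zero
  have hlt : Nat.card (ZMod p) < Nat.card (GaloisField p 2) := by
    rw [hcard, Nat.card_zmod]
    exact lt_self_pow₀ hp.one_lt one_lt_two
  simpa [hcard] using exists_isSidon_of_card_lt hlt

theorem one_div_sqrt_two_sub_mul_sqrt_le {n p S L : ℝ} (hn : 0 < n) (hS : 0 ≤ S) (hL : 0 ≤ L)
    (hp : n * (S + L) ≤ p) : (1 / √2 - 1 / n) * √(2 * (p + S) ^ 2) ≤ p - L := by
  have hpS : 0 ≤ p + S := by nlinarith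
  have hSL : S + L ≤ (p + S) / n := by rw [le_div_iff₀ hn]; nlinarith
  rw [Real.sqrt_mul zero_le_two, Real.sqrt_sq hpS]
  calc (1 / √2 - 1 / n) * (√2 * (p + S)) = (p + S) - √2 * ((p + S) / n) := by
        field_simp
    _ ≤ (p + S) - 1 * (S + L) := by
        gcongr
        exact Real.one_le_sqrt.2 one_le_two
    _ = p - L := by ring

theorem exists_forall_le_natCast (A : Finset ℤ) : ∃ S : ℕ, ∀ a ∈ A, a ≤ S :=
  let ⟨S, hS⟩ := A.bddAbove
  ⟨S.toNat, fun _ ha => (hS ha).trans (Int.self_le_toNat S)⟩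

theorem exists_superset_sub_eq (A : Finset ℤ) (hA : IsSidon (A : Set ℤ)) (hpos : ∀ a ∈ A, 0 < a)
    {n : ℤ} (hn : 0 < n) :
    ∃ A' : Finset ℤ, A ⊆ A' ∧ IsSidon (A' : Set ℤ) ∧ (∀ a ∈ A', 0 < a) ∧
      ∃ a ∈ A', ∃ b ∈ A', a - b = n := by
  by_cases hdiff : ∃ a ∈ A, ∃ b ∈ A, a - b = n
  · exact ⟨A, subset_rfl, hA, hpos, hdiff⟩
  push Not at hdiff
  obtain ⟨S, hS⟩ := exists_forall_le_natCast A
  set c := 2 * (S : ℤ) + n + 1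
  refine ⟨A ∪ ({0, n} : Finset ℤ).image (c + ·), Finset.subset_union_left, ?_, ?_, ?_⟩
  · rw [Finset.coe_union, Finset.coe_image, Finset.coe_pair]
    refine hA.union_image_add (isSidon_pair n) (fun a ha => ⟨(hpos a ha).le, hS a ha⟩)
      (by rintro b (rfl | rfl) <;> simp [hn.le]) ?_
    rintro a ha a' ha' b (rfl | rfl) b' (rfl | rfl) h
    · rfl
    · exact absurd (by omega) (hdiff a' ha' a ha)
    · exact absurd (by omega) (hdiff a ha a' ha')
    · rfl
  · intro a ha
    rcases Finset.mem_union.1 ha with ha | ha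
    · exact hpos a ha
    · simp only [Finset.mem_image, Finset.mem_insert, Finset.mem_singleton] at ha
      omega
  · exact ⟨c + n, by simp, c + 0, by simp, by ring⟩

theorem exists_superset_card_ge (A : Finset ℤ) (hA : IsSidon (A : Set ℤ))
    (hpos : ∀ a ∈ A, 0 < a) {n : ℕ} (hn : 0 < n) :
    ∃ A' : Finset ℤ, A ⊆ A' ∧ IsSidon (A' : Set ℤ) ∧ (∀ a ∈ A', 0 < a) ∧
      ∃ x : ℝ, n ≤ x ∧ (∀ a ∈ A', (a : ℝ) ≤ x) ∧ (1 / √2 - 1 / n) * √x ≤ A'.card := by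
  obtain ⟨S, hS⟩ := exists_forall_le_natCast A
  obtain ⟨p, hp_ge, hp⟩ := Nat.exists_infinite_primes (n * (S + A.card ^ 2 + 1))
  obtain ⟨B, hB_sub, hB_card, hB⟩ := exists_isSidon_of_prime hp
  obtain ⟨B', hB'B, hB'_card, hB'⟩ := hB.exists_subset_sub_mem_imp_eq (A - A)
  have hAA : (A - A).card ≤ A.card ^ 2 := Finset.card_sub_le.trans_eq (sq _).symm
  have hp1 : 1 ≤ p := hp.one_lt.le
  set c := 2 * (S : ℤ) + (p ^ 2 - 2) + 1
  have hB'_mem : ∀ b ∈ B', 0 ≤ b ∧ b ≤ p ^ 2 - 2 := fun b hb => hB_sub (hB'B hb)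
  refine ⟨A ∪ B'.image (c + ·), Finset.subset_union_left, ?_, ?_, 2 * (p + S) ^ 2, ?_, ?_, ?_⟩
  · rw [Finset.coe_union, Finset.coe_image]
    exact hA.union_image_add (hB.mono (Finset.coe_subset.2 hB'B))
      (fun a ha => ⟨(hpos a ha).le, hS a ha⟩) hB'_mem
      fun a ha a' ha' b hb b' hb' h => hB' b hb b' hb' (h ▸ Finset.sub_mem_sub ha ha')
  · intro a ha
    rcases Finset.mem_union.1 ha with ha | ha
    · exact hpos a ha
    · obtain ⟨b, hb, rfl⟩ := Finset.mem_image.1 ha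
      have := hB'_mem b hb
      omega
  · have : n ≤ p := le_trans (Nat.le_mul_of_pos_right n (by omega)) hp_ge
    have : (n : ℝ) ≤ p := by exact_mod_cast this
    have : (1 : ℝ) ≤ p := by exact_mod_cast hp1
    nlinarith [(S.cast_nonneg : (0 : ℝ) ≤ S)]
  · intro a ha
    suffices a ≤ 2 * ((p : ℤ) + S) ^ 2 by exact_mod_cast this
    rcases Finset.mem_union.1 ha with ha | ha
    · nlinarith [hS a ha]
    · obtain ⟨b, hb, rfl⟩ := Finset.mem_image.1 ha
      nlinarith [hB'_mem b hb]
  · have hcard : p ≤ (A ∪ B'.image (c + ·)).card + A.card ^ 2 := by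
      have := Finset.card_le_card (Finset.subset_union_right (s₁ := A) (s₂ := B'.image (c + ·)))
      rw [Finset.card_image_of_injective _ (add_right_injective c)] at this
      omega
    have hcard' : (p : ℝ) - A.card ^ 2 ≤ (A ∪ B'.image (c + ·)).card := by
      rw [sub_le_iff_le_add]; exact_mod_cast hcard
    refine le_trans ?_ hcard'
    refine one_div_sqrt_two_sub_mul_sqrt_le (by exact_mod_cast hn) (by positivity)
      (by positivity) ?_
    exact_mod_cast le_trans (Nat.mul_le_mul_left n (by omega)) hp_ge

theorem exists_superset_sub_eq_card_ge (A : Finset ℤ) (hA : IsSidon (A : Set ℤ))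
    (hpos : ∀ a ∈ A, 0 < a) {n : ℕ} (hn : 0 < n) :
    ∃ A' : Finset ℤ, A ⊆ A' ∧ (IsSidon (A' : Set ℤ) ∧ ∀ a ∈ A', 0 < a) ∧
      (∃ a ∈ A', ∃ b ∈ A', a - b = n) ∧
      ∃ x : ℝ, n ≤ x ∧ (∀ a ∈ A', (a : ℝ) ≤ x) ∧ (1 / √2 - 1 / n) * √x ≤ A'.card := by
  obtain ⟨A₁, hAA₁, hA₁, hpos₁, a, ha, b, hb, hab⟩ :=
    exists_superset_sub_eq A hA hpos (Int.natCast_pos.2 hn)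
  obtain ⟨A₂, hA₁A₂, hA₂, hpos₂, hx⟩ := exists_superset_card_ge A₁ hA₁ hpos₁ hn
  exact ⟨A₂, hAA₁.trans hA₁A₂, ⟨hA₂, hpos₂⟩, ⟨a, hA₁A₂ ha, b, hA₁A₂ hb, hab⟩, hx⟩

theorem exists_monotone_seq {α : Type*} [Preorder α] {P : α → Prop} {Q : ℕ → α → Prop} {a₀ : α}
    (h₀ : P a₀) (step : ∀ a, P a → ∀ n, ∃ b, a ≤ b ∧ P b ∧ Q n b) :
    ∃ f : ℕ → α, Monotone f ∧ (∀ n, P (f n)) ∧ ∀ n, Q n (f (n + 1)) := by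
  choose g hle hP hQ using step
  let f : ℕ → {a // P a} := fun n => Nat.rec ⟨a₀, h₀⟩ (fun n a => ⟨g a.1 a.2 n, hP _ _ _⟩) n
  exact ⟨fun n => (f n).1, monotone_nat_of_le_succ fun n => hle _ _ _, fun n => (f n).2,
    fun n => hQ _ _ _⟩

theorem IsSidon.isPerfectDifferenceSet {A : Set ℤ} (hA : IsSidon A)
    (hcover : ∀ u : ℤ, 0 < u → ∃ a ∈ A, ∃ b ∈ A, a - b = u) : IsPerfectDifferenceSet A := by
  intro u hu
  obtain ⟨a, ha, b, hb, hab⟩ : ∃ a ∈ A, ∃ b ∈ A, a - b = u := by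
    rcases hu.lt_or_gt with hu | hu
    · obtain ⟨a, ha, b, hb, hab⟩ := hcover (-u) (by omega)
      exact ⟨b, hb, a, ha, by omega⟩
    · exact hcover u hu
  refine ⟨(a, b), ⟨ha, hb, hab⟩, fun ⟨c, d⟩ ⟨hc, hd, hcd⟩ => ?_⟩
  obtain ⟨rfl, rfl⟩ := hA c hc d hd a ha b hb (hcd.trans hab.symm) (by omega)
  rfl

theorem IsSidon.card_mul_self_le {T : Finset ℤ} (hT : IsSidon (T : Set ℤ)) {N : ℕ}
    (hTN : ∀ t ∈ T, 0 < t ∧ t ≤ N) : T.card * T.card ≤ 2 * N + T.card := by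
  have h := Finset.card_le_card_of_injOn (t := Finset.Ioo (-N : ℤ) N) (fun q : ℤ × ℤ => q.1 - q.2)
    (fun q hq => ?_) (by rw [Finset.coe_offDiag]; exact hT.injOn_offDiag)
  · rw [Finset.offDiag_card, Int.card_Ioo] at h
    omega
  · obtain ⟨hq₁, hq₂, -⟩ := Finset.mem_offDiag.1 hq
    have := hTN _ hq₁
    have := hTN _ hq₂
    simp only [Finset.coe_Ioo, Set.mem_Ioo]
    omega

theorem finite_setOf_mem_le {A : Set ℤ} (hpos : ∀ a ∈ A, 0 < a) (x : ℝ) :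
    {a ∈ A | (a : ℝ) ≤ x}.Finite :=
  (Set.finite_Icc 1 ⌊x⌋).subset fun a ⟨ha, hax⟩ => ⟨hpos a ha, Int.le_floor.2 hax⟩

theorem IsSidon.ncard_le_two_mul_sqrt {A : Set ℤ} (hA : IsSidon A) (hpos : ∀ a ∈ A, 0 < a)
    {x : ℝ} (hx : 1 ≤ x) : (({a ∈ A | (a : ℝ) ≤ x}).ncard : ℝ) ≤ 2 * √x := by
  have hfin := finite_setOf_mem_le hpos x
  rw [Set.ncard_eq_toFinset_card _ hfin]
  set T := hfin.toFinset
  have hT : IsSidon (T : Set ℤ) := hA.mono (by simp [T, Set.sep_subset])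
  have h := hT.card_mul_self_le (N := ⌊x⌋₊) fun t ht => by
    simp only [T, Set.Finite.mem_toFinset, Set.mem_sep_iff] at ht
    rw [Int.natCast_floor_eq_floor (zero_le_one.trans hx)]
    exact ⟨hpos t ht.1, Int.le_floor.2 ht.2⟩
  have h' : (T.card : ℝ) * T.card ≤ 2 * x + T.card := by
    have : ((T.card * T.card : ℕ) : ℝ) ≤ (2 * ⌊x⌋₊ + T.card : ℕ) := by exact_mod_cast h
    push_cast at this
    linarith [Nat.floor_le (zero_le_one.trans hx)]
  have hs := Real.sq_sqrt (zero_le_one.trans hx)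
  have hs1 : 1 ≤ √x := Real.one_le_sqrt.2 hx
  nlinarith

theorem IsSidon.le_limsup_ncard_div_sqrt {A : Set ℤ} (hA : IsSidon A) (hpos : ∀ a ∈ A, 0 < a)
    {c : ℝ} (h : ∀ n : ℕ, 0 < n → ∃ T : Finset ℤ, (T : Set ℤ) ⊆ A ∧
      ∃ x : ℝ, n ≤ x ∧ (∀ t ∈ T, (t : ℝ) ≤ x) ∧ (c - 1 / n) * √x ≤ T.card) :
    c ≤ limsup (fun x : ℝ => (({a ∈ A | (a : ℝ) ≤ x}).ncard : ℝ) / √x) atTop := by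
  -- without an upper bound, `limsup` in `ℝ` would be the junk value `sInf ∅ = 0`
  have hbdd : IsBoundedUnder (· ≤ ·) atTop
      fun x : ℝ => (({a ∈ A | (a : ℝ) ≤ x}).ncard : ℝ) / √x := by
    refine isBoundedUnder_of_eventually_le (a := 2) ?_
    filter_upwards [eventually_ge_atTop 1] with x hx
    rw [div_le_iff₀ (Real.sqrt_pos.2 (by linarith))]
    exact hA.ncard_le_two_mul_sqrt hpos hx
  refine le_of_forall_pos_le_add fun ε hε => sub_le_iff_le_add.1 ?_
  refine le_limsup_of_frequently_le (frequently_atTop.2 fun x₀ => ?_) hbdd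
  obtain ⟨m, hm⟩ := exists_nat_one_div_lt hε
  obtain ⟨k, hk⟩ := exists_nat_ge x₀
  obtain ⟨T, hTA, x, hx, hTx, hT⟩ := h (m + k + 1) (by omega)
  have hm0 : (0 : ℝ) ≤ m := m.cast_nonneg
  have hk0 : (0 : ℝ) ≤ k := k.cast_nonneg
  push_cast at hx
  refine ⟨x, by linarith, ?_⟩
  rw [le_div_iff₀ (Real.sqrt_pos.2 (by linarith))]
  have hmk : 1 / ((m + k + 1 : ℕ) : ℝ) ≤ ε := by
    refine le_trans ?_ hm.le
    gcongr
    push_cast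
    linarith
  calc (c - ε) * √x ≤ (c - 1 / (m + k + 1 : ℕ)) * √x := by gcongr
    _ ≤ T.card := hT
    _ ≤ ({a ∈ A | (a : ℝ) ≤ x}).ncard := by
      have := Set.ncard_le_ncard (s := (T : Set ℤ)) (fun t ht => Set.mem_sep (hTA ht) (hTx t ht))
        (finite_setOf_mem_le hpos x)
      rw [Set.ncard_coe_finset] at this
      exact_mod_cast this

theorem stmt_12 :
    ∃ A : Set ℤ, (∀ a ∈ A, 0 < a) ∧ IsPerfectDifferenceSet A ∧
      1 / Real.sqrt 2 ≤
        limsup (fun x : ℝ => (({a ∈ A | (a : ℝ) ≤ x}).ncard : ℝ) / Real.sqrt x) atTop := by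
  obtain ⟨f, hmono, hgood, hf⟩ :=
    exists_monotone_seq (P := fun A : Finset ℤ => IsSidon (A : Set ℤ) ∧ ∀ a ∈ A, 0 < a)
      (a₀ := ∅) ⟨by simp [IsSidon], by simp⟩
      fun A hA n => exists_superset_sub_eq_card_ge A hA.1 hA.2 n.succ_pos
  set A : Set ℤ := ⋃ n, (f n : Set ℤ)
  have hsub : ∀ n, (f n : Set ℤ) ⊆ A := Set.subset_iUnion (fun n => (f n : Set ℤ))
  have hA : IsSidon A :=
    isSidon_iUnion (fun m n h => Finset.coe_subset.2 (hmono h)) fun n => (hgood n).1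
  have hpos : ∀ a ∈ A, 0 < a := by
    intro a ha
    obtain ⟨n, hn⟩ := Set.mem_iUnion.1 ha
    exact (hgood n).2 a hn
  refine ⟨A, hpos, hA.isPerfectDifferenceSet fun u hu => ?_, hA.le_limsup_ncard_div_sqrt hpos ?_⟩
  · obtain ⟨a, ha, b, hb, hab⟩ := (hf (u.toNat - 1)).1
    exact ⟨a, hsub _ ha, b, hsub _ hb, by omega⟩
  · intro n hn
    obtain ⟨k, rfl⟩ := Nat.exists_eq_add_of_lt hn
    exact ⟨f (k + 1), hsub _, by simpa using (hf k).2⟩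
end

section
/- There exists a Sidon set which is not a subset of any perfect difference set. -/
theorem stmt_15 :
    ∃ B : Set ℤ, (∀ b ∈ B, 0 < b) ∧ IsSidonSet B ∧
      ∀ A : Set ℤ, (∀ a ∈ A, 0 < a) → IsPerfectDifferenceSet A → ¬ B ⊆ A := by
  by_cases hex : ∃ A : Set ℤ, (∀ a ∈ A, 0 < a) ∧ IsPerfectDifferenceSet A
  · obtain ⟨A, hApos, hA⟩ := hex
    set B : Set ℤ := (fun a => 2 * a) '' A with hBdef
    -- B represents every even nonzero integer
    have hBrep : ∀ d : ℤ, d ≠ 0 → (∃ v : ℤ, d = 2 * v) →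
        ∃ b1 ∈ B, ∃ b2 ∈ B, b1 - b2 = d := by
      rintro d hd ⟨v, rfl⟩
      have hv : v ≠ 0 := by omega
      obtain ⟨⟨a1, a2⟩, ⟨ha1, ha2, hdiff⟩, -⟩ := hA v hv
      exact ⟨2 * a1, ⟨a1, ha1, rfl⟩, 2 * a2, ⟨a2, ha2, rfl⟩, by simp at hdiff ⊢; omega⟩
    refine ⟨B, ?_, ?_, ?_⟩
    · rintro b ⟨a, ha, rfl⟩
      have := hApos a ha
      show (0:ℤ) < 2 * a
      omega
    · -- B is Sidon
      intro u hu p hp q hq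
      obtain ⟨⟨a1, ha1, hpa1⟩, ⟨a2, ha2, hpa2⟩, hpu⟩ := hp
      obtain ⟨⟨b1, hb1, hqb1⟩, ⟨b2, hb2, hqb2⟩, hqu⟩ := hq
      have hpa1' : 2 * a1 = p.1 := hpa1
      have hpa2' : 2 * a2 = p.2 := hpa2
      have hqb1' : 2 * b1 = q.1 := hqb1
      have hqb2' : 2 * b2 = q.2 := hqb2
      have hv : a1 - a2 ≠ 0 := by omega
      obtain ⟨p0, hp0, huniq⟩ := hA (a1 - a2) hv
      have e1 : ((a1, a2) : ℤ × ℤ) = p0 := huniq (a1, a2) ⟨ha1, ha2, rfl⟩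
      have e2 : ((b1, b2) : ℤ × ℤ) = p0 := huniq (b1, b2) ⟨hb1, hb2, by simp; omega⟩
      have e3 : a1 = b1 ∧ a2 = b2 := by
        rw [← e2] at e1
        exact ⟨congrArg Prod.fst e1, congrArg Prod.snd e1⟩
      have : p = q := by
        apply Prod.ext <;> omega
      exact this
    · -- no perfect positive superset
      intro A' hpos' hperf' hsub
      -- the unique representation of 1 in A' gives an odd element o of A'
      obtain ⟨⟨x, y⟩, ⟨hx, hy, hxy⟩, -⟩ := hperf' 1 one_ne_zero
      simp only at hx hy hxy
      obtain ⟨o, hoA', ho⟩ : ∃ o ∈ A', Odd o := by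
        rcases Int.even_or_odd x with he | hox
        · exact ⟨y, hy, by obtain ⟨k, hk⟩ := he; exact ⟨k - 1, by omega⟩⟩
        · exact ⟨x, hx, hox⟩
      -- any odd element of A' equals o
      have hodd_uniq : ∀ z ∈ A', Odd z → z = o := by
        intro z hz hzodd
        by_contra hne
        have hd : z - o ≠ 0 := by omega
        obtain ⟨b1, hb1, b2, hb2, hb⟩ := hBrep (z - o)
          hd (by obtain ⟨k, hk⟩ := hzodd; obtain ⟨l, hl⟩ := ho; exact ⟨k - l, by omega⟩)
        obtain ⟨p0, hp0, huniq⟩ := hperf' (z - o) hd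
        have e1 := huniq (z, o) ⟨hz, hoA', by simp⟩
        have e2 := huniq (b1, b2) ⟨hsub hb1, hsub hb2, hb⟩
        have : z = b1 := by
          rw [← e2] at e1
          exact congrArg Prod.fst e1
        obtain ⟨a, -, ha⟩ := hb1
        have ha' : 2 * a = b1 := ha
        obtain ⟨k, hk⟩ := hzodd
        omega
      -- every even element of A' lies in B
      have heven_B : ∀ z ∈ A', (∃ v : ℤ, z = 2 * v) → z ∈ B := by
        intro z hz hze
        by_contra hzB
        -- pick some element of B
        obtain ⟨⟨px, py⟩, ⟨hpx, hpy, hpxy⟩, -⟩ := hA 1 one_ne_zero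
        have hbB : (2 * px : ℤ) ∈ B := ⟨px, hpx, rfl⟩
        have hne : z ≠ 2 * px := by rintro rfl; exact hzB hbB
        have hd : z - 2 * px ≠ 0 := by omega
        obtain ⟨b1, hb1, b2, hb2, hb⟩ := hBrep (z - 2 * px) hd
          (by obtain ⟨v, hv⟩ := hze; exact ⟨v - px, by omega⟩)
        obtain ⟨p0, hp0, huniq⟩ := hperf' (z - 2 * px) hd
        have e1 := huniq (z, 2 * px) ⟨hz, hsub hbB, by simp⟩
        have e2 := huniq (b1, b2) ⟨hsub hb1, hsub hb2, hb⟩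
        have : z = b1 := by rw [← e2] at e1; exact congrArg Prod.fst e1
        exact hzB (this ▸ hb1)
      -- find m ∉ A with m > o
      obtain ⟨⟨px, py⟩, ⟨hpx, hpy, hpxy⟩, huniqA⟩ := hA 1 one_ne_zero
      simp only at hpx hpy hpxy
      set n : ℤ := max o py + 1 with hn
      obtain ⟨m, hmA, hmo⟩ : ∃ m : ℤ, m ∉ A ∧ o < m := by
        by_cases hnA : n ∈ A
        · refine ⟨n + 1, fun hn1 => ?_, by omega⟩
          have := huniqA (n + 1, n) ⟨hn1, hnA, by simp⟩
          have : n = py := congrArg Prod.snd this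
          omega
        · exact ⟨n, hnA, by omega⟩
      -- the odd integer 2m - o has no representation in A'
      have hu : (2 * m - o : ℤ) ≠ 0 := by obtain ⟨k, hk⟩ := ho; omega
      obtain ⟨⟨s, t⟩, ⟨hs, ht, hst⟩, -⟩ := hperf' (2 * m - o) hu
      simp only at hs ht hst
      rcases Int.even_or_odd s with hse | hso
      · -- s even, so t is odd, t = o, s = 2m ∈ B, so m ∈ A: contradiction
        have hto : Odd t := by
          obtain ⟨k, hk⟩ := hse; obtain ⟨l, hl⟩ := ho
          exact ⟨k - m + l, by omega⟩
        have : t = o := hodd_uniq t ht hto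
        have hsB : s ∈ B := heven_B s hs (by obtain ⟨k, hk⟩ := hse; exact ⟨k, by omega⟩)
        obtain ⟨a, haA, ha⟩ := hsB
        have ha' : 2 * a = s := ha
        have : a = m := by omega
        exact hmA (this ▸ haA)
      · -- s odd, so s = o, then t = 2o - 2m < 0: contradiction with positivity
        have : s = o := hodd_uniq s hs hso
        have := hpos' t ht
        omega
  · refine ⟨{1}, ?_, ?_, ?_⟩
    · rintro b rfl; norm_num
    · intro u hu p hp q hq
      simp only [Set.mem_setOf_eq, Set.mem_singleton_iff] at hp hq
      obtain ⟨h1, h2, h3⟩ := hp; obtain ⟨h4, h5, h6⟩ := hq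
      exact Prod.ext (by omega) (by omega)
    · intro A hpos hperf _
      exact hex ⟨A, hpos, hperf⟩
end

section
/- If A is a set of integers and s_A(n) = 2 for infinitely many integers n, then d_A(n) ≥ 2 for infinitely many positive integers n. -/
/-!
Call `m > 0` a repeated difference if `d_A(m) ≥ 2`, and write `C_m = {x ∈ A | x + m ∈ A}`.
If `s_A(n) = 2`, with representations `a < c ≤ d < b`, then `m = b - c = d - a` is a repeated
difference and `n = a + c + m` with `a ≠ c` in `C_m`. On the other hand any two elements
`x < y` of some `C_m` give the two representations `(y, x)` and `(y + m, x + m)` of `y - x`,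
so if there were only finitely many repeated differences, every `C_m` would be finite, and
then so would be the set of `n` with `s_A(n) = 2`, which lies in `⋃ₘ (C_m + C_m + m)`.
-/

open Set

section

variable {G : Type*} [AddCommGroup G] [LinearOrder G] {A : Set G}

def sumReps (A : Set G) (n : G) : Set (G × G) :=
  {p | p.1 ∈ A ∧ p.2 ∈ A ∧ p.1 ≤ p.2 ∧ p.1 + p.2 = n}

def repeatedDiffs (A : Set G) : Set G :=
  {n | 0 < n ∧ ∃ p q : G × G, p ≠ q ∧
    (p.1 ∈ A ∧ p.2 ∈ A ∧ p.1 - p.2 = n) ∧ (q.1 ∈ A ∧ q.2 ∈ A ∧ q.1 - q.2 = n)}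

def shiftInter (A : Set G) (m : G) : Set G :=
  {x | x ∈ A ∧ x + m ∈ A}

lemma mem_repeatedDiffs {m x y : G} (hm : 0 < m) (hx : x ∈ shiftInter A m)
    (hy : y ∈ shiftInter A m) (hxy : x ≠ y) : m ∈ repeatedDiffs A :=
  ⟨hm, (x + m, x), (y + m, y), fun h => hxy (congrArg Prod.snd h),
    ⟨hx.2, hx.1, add_sub_cancel_left x m⟩, ⟨hy.2, hy.1, add_sub_cancel_left y m⟩⟩

variable [IsOrderedAddMonoid G]

lemma sub_mem_repeatedDiffs {m x y : G} (hm : m ≠ 0) (hx : x ∈ shiftInter A m)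
    (hy : y ∈ shiftInter A m) (hxy : x < y) : y - x ∈ repeatedDiffs A := by
  refine mem_repeatedDiffs (sub_pos.mpr hxy) ⟨hx.1, ?_⟩ ⟨hx.2, ?_⟩ (by grind)
  · simpa using hy.1
  · convert hy.2 using 1
    abel

lemma shiftInter_finite (hA : (repeatedDiffs A).Finite) {m : G} (hm : m ≠ 0) :
    (shiftInter A m).Finite := by
  rcases (shiftInter A m).eq_empty_or_nonempty with h | ⟨x, hx⟩
  · simp [h]
  refine (((hA.image (x + ·)).union (hA.image (x - ·))).insert x).subset fun y hy => ?_
  rcases lt_trichotomy x y with hxy | rfl | hxy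
  · exact mem_insert_of_mem _
      (mem_union_left _ ⟨y - x, sub_mem_repeatedDiffs hm hx hy hxy, by simp⟩)
  · exact mem_insert _ _
  · exact mem_insert_of_mem _
      (mem_union_right _ ⟨x - y, sub_mem_repeatedDiffs hm hy hx hxy, by simp⟩)

lemma exists_shiftInter_of_add_eq_add {a b c d : G} (ha : a ∈ A) (hb : b ∈ A)
    (hc : c ∈ A) (hd : d ∈ A) (hcd : c ≤ d) (hsum : a + b = c + d) (hac : a < c) :
    ∃ m ∈ repeatedDiffs A, ∃ x ∈ shiftInter A m, ∃ y ∈ shiftInter A m, x + y + m = a + b := by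
  have hc' : c ∈ shiftInter A (b - c) := ⟨hc, by rwa [add_sub_cancel]⟩
  have ha' : a ∈ shiftInter A (b - c) := ⟨ha, by convert hd using 1; grind⟩
  exact ⟨b - c, mem_repeatedDiffs (by grind) hc' ha' hac.ne', c, hc', a, ha', by abel⟩

lemma exists_shiftInter_of_ncard_sumReps_eq_two {n : G} (hn : (sumReps A n).ncard = 2) :
    ∃ m ∈ repeatedDiffs A, ∃ x ∈ shiftInter A m, ∃ y ∈ shiftInter A m, x + y + m = n := by
  obtain ⟨⟨a, b⟩, ⟨c, d⟩, hne, hreps⟩ := ncard_eq_two.mp hn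
  obtain ⟨ha, hb, hab, rfl⟩ : (a, b) ∈ sumReps A n := hreps ▸ mem_insert _ _
  obtain ⟨hc, hd, hcd, hsum⟩ : (c, d) ∈ sumReps A (a + b) :=
    hreps ▸ mem_insert_of_mem _ rfl
  rcases lt_trichotomy a c with hac | rfl | hca
  · exact exists_shiftInter_of_add_eq_add ha hb hc hd hcd hsum.symm hac
  · exact absurd (by grind) hne
  · exact hsum ▸ exists_shiftInter_of_add_eq_add hc hd ha hb hab hsum hca

lemma setOf_ncard_sumReps_eq_two_subset :
    {n | (sumReps A n).ncard = 2} ⊆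
      ⋃ m ∈ repeatedDiffs A,
        (fun p : G × G => p.1 + p.2 + m) '' (shiftInter A m ×ˢ shiftInter A m) := by
  intro n hn
  obtain ⟨m, hm, x, hx, y, hy, rfl⟩ := exists_shiftInter_of_ncard_sumReps_eq_two hn
  exact mem_biUnion hm ⟨(x, y), ⟨hx, hy⟩, rfl⟩

end

theorem stmt_17 (A : Set ℤ)
    (h : {n : ℤ |
        ({p : ℤ × ℤ | p.1 ∈ A ∧ p.2 ∈ A ∧ p.1 ≤ p.2 ∧ p.1 + p.2 = n}).ncard = 2}.Infinite) :
    {n : ℤ | 0 < n ∧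
      ∃ p q : ℤ × ℤ, p ≠ q ∧
        (p.1 ∈ A ∧ p.2 ∈ A ∧ p.1 - p.2 = n) ∧
        (q.1 ∈ A ∧ q.2 ∈ A ∧ q.1 - q.2 = n)}.Infinite := by
  change (repeatedDiffs A).Infinite
  intro hA
  refine h (Finite.subset (hA.biUnion fun m hm => ?_) setOf_ncard_sumReps_eq_two_subset)
  have hC := shiftInter_finite hA hm.1.ne'
  exact (hC.prod hC).image _
end
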